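/- arXiv:1409.5030 — 5 statements merged into one kernel-verified Lean document; each statement's English description precedes it below -/
import Mathlib

section
/- For the Laurent polynomial f(x,y,z,w) = (1+x+y)^3/(xyzw) + z + w in four variables, the classical period π_f(t) = Σ_{d≥0} α_d t^d, where α_d is the constant term (coefficient of the unit monomial) of f^d, satisfies α_d = 0 unless 3 divides d, and α_{3d} = ((3d)!)^2 / (d!)^6 for all d ≥ 0. -/
open scoped Nat

/-- The mirror Laurent polynomial of the cubic 4-fold lives in the ring of
Laurent polynomials in 4 variables, modelled as the monoid algebra of `Fin 4 →₀ ℤ`. -/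
noncomputable abbrev LaurentPoly4 : Type := AddMonoidAlgebra ℂ (Fin 4 →₀ ℤ)

/-- The monomial `x₀^{v 0} x₁^{v 1} x₂^{v 2} x₃^{v 3}`. -/
noncomputable def mono4 (v : Fin 4 →₀ ℤ) : LaurentPoly4 := AddMonoidAlgebra.single v 1

/-- `f = (1 + x + y)^3 / (x y z w) + z + w`, the mirror of the cubic 4-fold. -/
noncomputable def cubicMirror : LaurentPoly4 :=
  (1 + mono4 (Finsupp.single 0 1) + mono4 (Finsupp.single 1 1)) ^ 3
      * mono4 (-(Finsupp.single 0 1 + Finsupp.single 1 1 + Finsupp.single 2 1 + Finsupp.single 3 1))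
    + mono4 (Finsupp.single 2 1) + mono4 (Finsupp.single 3 1)

/-!
Write `f = g³·(xyzw)⁻¹ + z + w` with `g = 1 + x + y`. In the trinomial expansion of `f^n`, the
term `(g³·(xyzw)⁻¹)^k z^j w^i` contributes the coefficient of `x^k y^k z^(k-j) w^(k-i)` in
`g^(3k)`. As `g` involves neither `z` nor `w`, only `j = i = k`, hence `n = 3k`, survives; its
multinomial weight `(3k)!/(k!)³` equals the coefficient of `x^k y^k` in `(1 + x + y)^(3k)`, so
`α_{3k} = ((3k)!/(k!)³)²`.
-/

open Finset

theorem Nat.choose_mul_choose_mul_factorial_pow_three (d : ℕ) :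
    (3 * d).choose d * (2 * d).choose d * d ! ^ 3 = (3 * d)! := by
  have h2 := Nat.add_choose_mul_factorial_mul_factorial d d
  have h3 := Nat.add_choose_mul_factorial_mul_factorial (2 * d) d
  rw [← two_mul] at h2
  rw [show 2 * d + d = 3 * d by ring] at h3
  rw [← h3, ← h2]
  ring

theorem add_add_pow {R : Type*} [CommSemiring R] (a b c : R) (n : ℕ) :
    (a + b + c) ^ n = ∑ k ∈ range (n + 1), ∑ j ∈ range (n - k + 1),
      ((n.choose k * (n - k).choose j : ℕ) : R) * (a ^ k * b ^ j * c ^ (n - k - j)) := by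
  rw [add_assoc, add_pow]
  refine sum_congr rfl fun k _ => ?_
  rw [add_pow, mul_sum, sum_mul]
  refine sum_congr rfl fun j _ => ?_
  push_cast
  ring

namespace AddMonoidAlgebra

variable {R G : Type*} [CommSemiring R] [AddCommGroup G]

theorem coeff_add_single_add_single_pow (p : R[G]) (b c : G) (n : ℕ) (v : G) :
    ((p + single b 1 + single c 1) ^ n).coeff v =
      ∑ k ∈ range (n + 1), ∑ j ∈ range (n - k + 1),
        ((n.choose k * (n - k).choose j : ℕ) : R) *
          (p ^ k).coeff (v - (j • b + (n - k - j) • c)) := by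
  rw [add_add_pow, coeff_sum, Finset.sum_apply']
  refine sum_congr rfl fun k _ => ?_
  rw [coeff_sum, Finset.sum_apply']
  refine sum_congr rfl fun j _ => ?_
  rw [natCast_def, single_pow, single_pow, mul_assoc, single_mul_single, coeff_single_zero_mul,
    coeff_mul_single_apply]
  simp [sub_eq_add_neg]

theorem coeff_one_add_single_add_single_pow [DecidableEq G] (a b : G) (n : ℕ) (v : G) :
    ((1 + single a 1 + single b 1 : R[G]) ^ n).coeff v =
      ∑ k ∈ range (n + 1), ∑ j ∈ range (n - k + 1),
        if j • a + (n - k - j) • b = v then ((n.choose k * (n - k).choose j : ℕ) : R) else 0 := by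
  rw [coeff_add_single_add_single_pow]
  refine sum_congr rfl fun k _ => sum_congr rfl fun j _ => ?_
  rw [one_pow, one_def, coeff_single, Finsupp.single_apply]
  simp [eq_sub_iff_add_eq]

end AddMonoidAlgebra

open AddMonoidAlgebra

noncomputable def oneAddXAddY : LaurentPoly4 :=
  1 + mono4 (Finsupp.single 0 1) + mono4 (Finsupp.single 1 1)

theorem coeff_oneAddXAddY_pow (m : ℕ) (v : Fin 4 →₀ ℤ) :
    (oneAddXAddY ^ m).coeff v = ∑ k ∈ range (m + 1), ∑ j ∈ range (m - k + 1),
      if v 0 = j ∧ v 1 = (m - k - j : ℕ) ∧ v 2 = 0 ∧ v 3 = 0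
        then ((m.choose k * (m - k).choose j : ℕ) : ℂ) else 0 := by
  rw [oneAddXAddY, mono4, mono4, coeff_one_add_single_add_single_pow]
  refine sum_congr rfl fun k _ => sum_congr rfl fun j _ => if_congr ?_ rfl rfl
  constructor
  · rintro rfl
    simp
  · rintro ⟨h0, h1, h2, h3⟩
    ext i
    fin_cases i <;> simp [*]

theorem coeff_oneAddXAddY_pow_eq_zero (m : ℕ) {v : Fin 4 →₀ ℤ} (hv : v 2 ≠ 0 ∨ v 3 ≠ 0) :
    (oneAddXAddY ^ m).coeff v = 0 := by
  rw [coeff_oneAddXAddY_pow]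
  refine sum_eq_zero fun k _ => sum_eq_zero fun j _ => if_neg ?_
  tauto

theorem coeff_oneAddXAddY_pow_three_mul (d : ℕ) {v : Fin 4 →₀ ℤ} (h0 : v 0 = d) (h1 : v 1 = d)
    (h2 : v 2 = 0) (h3 : v 3 = 0) :
    (oneAddXAddY ^ (3 * d)).coeff v = ((3 * d).choose d * (2 * d).choose d : ℕ) := by
  rw [coeff_oneAddXAddY_pow, sum_eq_single d, sum_eq_single d]
  · simp [*, show 3 * d - d = 2 * d by omega, show 2 * d - d = d by omega]
  · intro j _ hj
    rw [if_neg]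
    simp only [h0, h1, h2, h3, Nat.cast_inj, not_and]
    omega
  · exact fun h => absurd (mem_range.2 (by omega)) h
  · intro k hk hkd
    rw [mem_range] at hk
    refine sum_eq_zero fun j _ => if_neg ?_
    simp only [h0, h1, h2, h3, Nat.cast_inj, not_and]
    omega
  · exact fun h => absurd (mem_range.2 (by omega)) h

theorem coeff_zero_cubicMirror_pow (n : ℕ) : (cubicMirror ^ n).coeff 0 =
    ∑ k ∈ range (n + 1),
      if n = 3 * k then (((3 * k).choose k * (2 * k).choose k : ℕ) : ℂ) ^ 2 else 0 := by
  change ((oneAddXAddY ^ 3 * mono4 _ + mono4 _ + mono4 _) ^ n).coeff 0 = _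
  rw [mono4, mono4, mono4, coeff_add_single_add_single_pow]
  refine sum_congr rfl fun k _ => ?_
  simp only [mul_pow, ← pow_mul, single_pow, one_pow, coeff_mul_single_apply, mul_one]
  have hvanish : ∀ j : ℕ, ¬(j = k ∧ n - k - j = k) →
      (oneAddXAddY ^ (3 * k)).coeff (0 - (j • Finsupp.single 2 1 + (n - k - j) • Finsupp.single 3 1)
        + -(k • -(Finsupp.single 0 1 + Finsupp.single 1 1 + Finsupp.single 2 1
          + Finsupp.single 3 1))) = 0 := by
    intro j hj
    apply coeff_oneAddXAddY_pow_eq_zero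
    simp only [Finsupp.sub_apply, Finsupp.add_apply, Finsupp.neg_apply, Finsupp.smul_apply,
      Finsupp.coe_zero, Pi.zero_apply, Finsupp.single_apply, Fin.reduceEq, ↓reduceIte,
      nsmul_eq_mul]
    omega
  split_ifs with hn
  · subst hn
    rw [sum_eq_single k]
    · rw [coeff_oneAddXAddY_pow_three_mul k, sq] <;>
        simp [show 3 * k - k = 2 * k by omega, show 2 * k - k = k by omega]
    · exact fun j _ hj => by rw [hvanish j (by omega), mul_zero]
    · exact fun h => absurd (mem_range.2 (by omega)) h
  · exact sum_eq_zero fun j _ => by rw [hvanish j (by omega), mul_zero]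

/-- The constant term of `f^d` vanishes unless `3 ∣ d`, and equals
`((3d)!)² / (d!)⁶` for exponent `3d`. -/
theorem cubic_mirror_period_coeffs :
    (∀ d : ℕ, ¬ (3 ∣ d) → (cubicMirror ^ d).coeff 0 = 0) ∧
    (∀ d : ℕ, (cubicMirror ^ (3 * d)).coeff 0 =
      (((3 * d)! : ℂ) * ((3 * d)! : ℂ)) / ((d ! : ℂ)) ^ 6) := by
  refine ⟨fun n hn => ?_, fun d => ?_⟩
  · rw [coeff_zero_cubicMirror_pow]
    exact sum_eq_zero fun k _ => if_neg fun h => hn ⟨k, h⟩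
  · rw [coeff_zero_cubicMirror_pow, sum_eq_single d (fun k _ hk => if_neg (by omega))
      (fun h => absurd (mem_range.2 (by omega)) h), if_pos rfl,
      eq_div_iff (pow_ne_zero _ (Nat.cast_ne_zero.2 d.factorial_ne_zero)),
      ← Nat.choose_mul_choose_mul_factorial_pow_three]
    push_cast
    ring
end

section
/- The power series G(t) = Σ_{d=0}^∞ ((3d)!)^2 / (d!)^6 · t^{3d} satisfies the differential equation L G = 0, where L = D^4 − 729 t^3 (D+1)^2 (D+2)^2 and D = t · d/dt, as an identity of formal power series. -/
open scoped Nat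
open PowerSeries

/-- The operator `D = t d/dt` on formal power series. -/
noncomputable def Dop : ℚ⟦X⟧ → ℚ⟦X⟧ := fun f => PowerSeries.mk fun n => (n : ℚ) * coeff n f

/-- `G(t) = Σ_d ((3d)!)²/(d!)⁶ t^{3d}`, the regularized quantum period of the cubic 4-fold. -/
noncomputable def cubicPeriod : ℚ⟦X⟧ :=
  PowerSeries.mk fun n => if 3 ∣ n then ((n ! : ℚ)) ^ 2 / (((n / 3)! : ℚ)) ^ 6 else 0

/-! `D` multiplies `t ^ n` by `n`, so `L G = 0` is the recurrence
`(n + 3)⁴ a (n + 3) = 729 (n + 1)² (n + 2)² a n` for the coefficients `a n` of `G`, together with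
`a 1 = a 2 = 0`. For `a (3d) = ((3d)!)² / (d!)⁶` it is the ratio
`a (3d + 3) / a (3d) = 9 (3d + 1)² (3d + 2)² / (d + 1)⁴`. -/

namespace Dop

theorem coeff_apply (f : ℚ⟦X⟧) (n : ℕ) : coeff n (Dop f) = n * coeff n f :=
  coeff_mk _ _

theorem coeff_add_nsmul (k : ℕ) (f : ℚ⟦X⟧) (n : ℕ) :
    coeff n (Dop f + k • f) = (n + k) * coeff n f := by
  rw [map_add, map_nsmul, coeff_apply, nsmul_eq_mul, add_mul]

theorem coeff_add_self (f : ℚ⟦X⟧) (n : ℕ) : coeff n (Dop f + f) = (n + 1) * coeff n f := by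
  simpa using coeff_add_nsmul 1 f n

theorem eq_zero_of_coeff_recurrence (f : ℚ⟦X⟧) (h₁ : coeff 1 f = 0) (h₂ : coeff 2 f = 0)
    (hrec : ∀ n : ℕ, ((n : ℚ) + 3) ^ 4 * coeff (n + 3) f
      = 729 * ((n : ℚ) + 1) ^ 2 * ((n : ℚ) + 2) ^ 2 * coeff n f) :
    Dop (Dop (Dop (Dop f)))
      - 729 * X ^ 3 *
        ((fun f => Dop f + f) ((fun f => Dop f + f)
          ((fun f => Dop f + 2 • f) ((fun f => Dop f + 2 • f) f)))) = 0 := by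
  ext n
  rw [map_sub, map_zero, mul_assoc, ← map_ofNat (C (R := ℚ)) 729, coeff_C_mul]
  match n with
  | 0 | 1 | 2 => simp [coeff_apply, coeff_X_pow_mul', h₁, h₂]
  | m + 3 =>
    simp only [coeff_apply, coeff_X_pow_mul, coeff_add_self, coeff_add_nsmul]
    push_cast
    linear_combination hrec m

end Dop

theorem coeff_cubicPeriod_of_not_dvd {n : ℕ} (h : ¬3 ∣ n) : coeff n cubicPeriod = 0 := by
  rw [cubicPeriod, coeff_mk, if_neg h]

theorem coeff_cubicPeriod_three_mul (d : ℕ) :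
    coeff (3 * d) cubicPeriod = ((3 * d)! : ℚ) ^ 2 / (d ! : ℚ) ^ 6 := by
  rw [cubicPeriod, coeff_mk, if_pos (dvd_mul_right 3 d), Nat.mul_div_cancel_left d three_pos]

theorem Nat.factorial_three_mul_succ (d : ℕ) :
    (3 * (d + 1))! = (3 * d + 3) * (3 * d + 2) * (3 * d + 1) * (3 * d)! := by
  rw [mul_add_one]
  simp only [Nat.factorial_succ]
  ring

theorem coeff_cubicPeriod_recurrence (n : ℕ) :
    ((n : ℚ) + 3) ^ 4 * coeff (n + 3) cubicPeriod
      = 729 * ((n : ℚ) + 1) ^ 2 * ((n : ℚ) + 2) ^ 2 * coeff n cubicPeriod := by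
  by_cases h : 3 ∣ n
  · obtain ⟨d, rfl⟩ := h
    rw [show 3 * d + 3 = 3 * (d + 1) by ring, coeff_cubicPeriod_three_mul,
      coeff_cubicPeriod_three_mul, Nat.factorial_three_mul_succ, Nat.factorial_succ]
    field_simp
    push_cast
    ring
  · have h' : ¬3 ∣ n + 3 := by omega
    rw [coeff_cubicPeriod_of_not_dvd h, coeff_cubicPeriod_of_not_dvd h', mul_zero, mul_zero]

/-- `G` satisfies `L G = 0` where `L = D⁴ − 729 t³ (D+1)²(D+2)²` and `D = t d/dt`. -/
theorem cubic_period_satisfies_QDE :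
    Dop (Dop (Dop (Dop cubicPeriod)))
      - 729 * X ^ 3 *
        ((fun f => Dop f + f) ((fun f => Dop f + f)
          ((fun f => Dop f + 2 • f) ((fun f => Dop f + 2 • f) cubicPeriod)))) = 0 :=
  Dop.eq_zero_of_coeff_recurrence cubicPeriod (coeff_cubicPeriod_of_not_dvd (by decide))
    (coeff_cubicPeriod_of_not_dvd (by decide)) coeff_cubicPeriod_recurrence
end

section
/- Let α_d = Σ_{k+l=d} (3l)!·(3l)!·(k+l)! / (k! · (l!)^7) · (−36)^k for d ≥ 0, i.e. the Taylor coefficients of π(t) = Σ_{k,l≥0} (3l)!(3l)!(k+l)!/(k!(l!)^7) (−36)^k t^{k+l}. Then the coefficients satisfy the recurrence determined by the operator L = (36t+1)^4(693t−1) D^4 + 18t(36t+1)^3(13860t+61) D^3 + 9t(36t+1)^2(3492720t^2+57672t+77) D^2 + 144t(36t+1)(11226600t^3+377622t^2+2754t+1) D + 15552t^2(1796256t^3+98496t^2+1605t+7), i.e. L π = 0 as formal power series. -/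
open scoped Nat
open PowerSeries

/-- `α_d = Σ_{k+l=d} (3l)!·(3l)!·(k+l)!/(k!·(l!)⁷)·(−36)^k`, the coefficients of the
regularized quantum period of a `(3,3)` complete intersection in `ℙ⁶`. -/
noncomputable def alpha33 (d : ℕ) : ℚ :=
  ∑ l ∈ Finset.range (d + 1),
    (((3 * l)! : ℚ) * ((3 * l)! : ℚ) * (((d - l) + l)! : ℚ))
        / (((d - l)! : ℚ) * ((l ! : ℚ)) ^ 7) * (-36 : ℚ) ^ (d - l)

/-! Write `α_n = ∑_l T(n, l)`, where `T(n, l)` is the summand with `k = n - l`. The term `T` is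
hypergeometric in both indices: `T(n+1, l) / T(n, l)` and `T(n+1, l+1) / T(n, l)` are rational.
Creative telescoping then produces polynomials `P_0, …, P_5` and the certificate `G(l) = l⁵ T(n, l)`
with `n · ∑ᵢ Pᵢ(n - i) T(n - i, l) = G(l + 1) - G(l)`; summing over `l` gives the recurrence
`∑ᵢ Pᵢ(n - i) α_{n-i} = 0` for `n ≥ 5`. Since `L = ∑ᵢ tⁱ Pᵢ(D)`, this is the vanishing of the
coefficient of `tⁿ` in `L π`; the coefficients with `n < 5` are computed directly. -/

open Finset

/-- `periodTerm n l` is the summand of `α_n` with `k = n - l`, set to zero for `l > n`. -/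
noncomputable def periodTerm (n l : ℕ) : ℚ :=
  if l ≤ n then
    ((3 * l)! : ℚ) ^ 2 * (n ! : ℚ) / ((n - l)! * (l ! : ℚ) ^ 7) * (-36 : ℚ) ^ (n - l)
  else 0

lemma periodTerm_of_lt {n l : ℕ} (h : n < l) : periodTerm n l = 0 := if_neg (by omega)

lemma alpha33_eq_sum_periodTerm {n N : ℕ} (h : n < N) :
    alpha33 n = ∑ l ∈ range N, periodTerm n l := by
  rw [← sum_range_add_sum_Ico _ (show n + 1 ≤ N by omega),
    sum_eq_zero (s := Ico _ _) fun l hl => periodTerm_of_lt (by simp at hl; omega), add_zero,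
    alpha33]
  refine sum_congr rfl fun l hl => ?_
  rw [periodTerm, if_pos (by simp at hl; omega), Nat.sub_add_cancel (by simp at hl; omega), sq]

lemma periodTerm_succ_left (n l : ℕ) :
    ((n : ℚ) + 1 - l) * periodTerm (n + 1) l = -36 * ((n : ℚ) + 1) * periodTerm n l := by
  rcases lt_trichotomy l (n + 1) with hl | rfl | hl
  · have hl : l ≤ n := by omega
    rw [show (n : ℚ) + 1 - l = ((n - l : ℕ) : ℚ) + 1 by push_cast [hl]; ring,
      periodTerm, periodTerm, if_pos (by omega), if_pos hl,
      show n + 1 - l = (n - l) + 1 by omega, Nat.factorial_succ (n - l), Nat.factorial_succ n,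
      pow_succ]
    have := (n - l).factorial_pos
    push_cast
    field_simp
    ring
  · rw [periodTerm_of_lt n.lt_succ_self]
    push_cast
    ring
  · rw [periodTerm_of_lt hl, periodTerm_of_lt (by omega), mul_zero, mul_zero]

lemma periodTerm_succ_succ (n l : ℕ) :
    ((l : ℚ) + 1) ^ 5 * periodTerm (n + 1) (l + 1)
      = 9 * (3 * (l : ℚ) + 1) ^ 2 * (3 * (l : ℚ) + 2) ^ 2 * ((n : ℚ) + 1) * periodTerm n l := by
  by_cases hl : l ≤ n
  · rw [periodTerm, periodTerm, if_pos (by omega), if_pos hl, Nat.add_sub_add_right,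
      show 3 * (l + 1) = 3 * l + 2 + 1 by ring, Nat.factorial_succ (3 * l + 2),
      Nat.factorial_succ (3 * l + 1), Nat.factorial_succ (3 * l), Nat.factorial_succ n,
      Nat.factorial_succ l]
    have := l.factorial_pos
    push_cast
    field_simp
    ring
  · rw [periodTerm_of_lt (by omega), periodTerm_of_lt (by omega), mul_zero, mul_zero]

/-- `L = ∑ᵢ ∑ⱼ pfCoeff i j • Xⁱ Dʲ`. -/
def pfCoeff : Matrix (Fin 6) (Fin 5) ℚ :=
  !![0, 0, 0, 0, -1;
    0, 144, 693, 1098, 549;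
    108864, 401760, 568944, 368064, 92016;
    24960960, 68654304, 69704064, 31212864, 5202144;
    1531809792, 3574222848, 2935968768, 1021206528, 127650816;
    27935373312, 58198694400, 40739086080, 11639738880, 1163973888]

def pfPoly (i : Fin 6) (θ : ℚ) : ℚ := ∑ j : Fin 5, pfCoeff i j * θ ^ (j : ℕ)

lemma mul_sum_pfPoly_mul_periodTerm_eq_sub (m l : ℕ) :
    ((m : ℚ) + 5) * ∑ i : Fin 6, pfPoly i (m + 5 - i : ℕ) * periodTerm (m + 5 - i) l
      = ((l : ℚ) + 1) ^ 5 * periodTerm (m + 5) (l + 1) - (l : ℚ) ^ 5 * periodTerm (m + 5) l := by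
  have h4 := periodTerm_succ_left (m + 4) l
  have h3 := periodTerm_succ_left (m + 3) l
  have h2 := periodTerm_succ_left (m + 2) l
  have h1 := periodTerm_succ_left (m + 1) l
  have h0 := periodTerm_succ_left m l
  have hl := periodTerm_succ_succ (m + 4) l
  simp only [Fin.sum_univ_six, Fin.sum_univ_five, pfPoly, pfCoeff, Matrix.of_apply, Matrix.cons_val,
    Fin.coe_ofNat_eq_mod, Nat.reduceMod, Nat.reduceSubDiff, Nat.sub_zero, Nat.add_sub_cancel]
  push_cast at h0 h1 h2 h3 h4 hl ⊢
  obtain ⟨n, hn⟩ : ∃ n : ℚ, (m : ℚ) = n - 5 := ⟨m + 5, by ring⟩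
  set y : ℚ := (l : ℚ)
  rw [hn] at h0 h1 h2 h3 h4 hl ⊢
  -- the multipliers come from Zeilberger's algorithm
  linear_combination (-(n^4 + n^3*y + n^2*y^2 + n*y^3 + y^4)) * h4
    + (36*n + 288*n*y + 765*n*y^2 + 693*n*y^3 + 180*n^2 + 108*n^2*y + 657*n^2*y^2 - 513*n^3
      + 621*n^3*y + 585*n^4) * h3
    + (-55080*n + 22356*n*y - 24948*n*y^2 + 170748*n^2 - 70956*n^2*y + 24948*n^2*y^2
      - 186624*n^3 + 48600*n^3*y + 70956*n^4) * h2
    + (-6998400*n + 1796256*n*y + 15793056*n^2 - 2694384*n^2*y - 11442384*n^3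
      + 898128*n^3*y + 2647728*n^4) * h1
    + (-193995648*n + 355658688*n^2 - 193995648*n^3 + 32332608*n^4) * h0 - hl

lemma alpha33_recurrence (m : ℕ) :
    ∑ i : Fin 6, pfPoly i (m + 5 - i : ℕ) * alpha33 (m + 5 - i) = 0 := by
  refine (mul_eq_zero.mp ?_).resolve_left (show (m : ℚ) + 5 ≠ 0 by positivity)
  have hα (i : Fin 6) : alpha33 (m + 5 - i) = ∑ l ∈ range (m + 6), periodTerm (m + 5 - i) l :=
    alpha33_eq_sum_periodTerm (by omega)
  calc ((m : ℚ) + 5) * ∑ i : Fin 6, pfPoly i (m + 5 - i : ℕ) * alpha33 (m + 5 - i)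
      = ∑ l ∈ range (m + 6),
          ((m : ℚ) + 5) * ∑ i : Fin 6, pfPoly i (m + 5 - i : ℕ) * periodTerm (m + 5 - i) l := by
        simp only [hα, mul_sum]
        exact sum_comm
    _ = ∑ l ∈ range (m + 6), (((l + 1 : ℕ) : ℚ) ^ 5 * periodTerm (m + 5) (l + 1)
          - (l : ℚ) ^ 5 * periodTerm (m + 5) l) := by
        push_cast
        exact sum_congr rfl fun l _ => mul_sum_pfPoly_mul_periodTerm_eq_sub m l
    _ = 0 := by
        rw [sum_range_sub (fun l => (l : ℚ) ^ 5 * periodTerm (m + 5) l),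
          periodTerm_of_lt (by omega)]
        simp

lemma coeff_Dop_iterate (j n : ℕ) (f : ℚ⟦X⟧) :
    coeff n (Dop^[j] f) = (n : ℚ) ^ j * coeff n f := by
  induction j with
  | zero => simp
  | succ j ih =>
    rw [Function.iterate_succ_apply', Dop, coeff_mk, ih, pow_succ, mul_comm _ (n : ℚ), mul_assoc]

noncomputable def pfOperator (f : ℚ⟦X⟧) : ℚ⟦X⟧ :=
  (36 * X + 1) ^ 4 * (693 * X - 1) * Dop (Dop (Dop (Dop f)))
    + 18 * X * (36 * X + 1) ^ 3 * (13860 * X + 61) * Dop (Dop (Dop f))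
    + 9 * X * (36 * X + 1) ^ 2 * (3492720 * X ^ 2 + 57672 * X + 77) * Dop (Dop f)
    + 144 * X * (36 * X + 1) * (11226600 * X ^ 3 + 377622 * X ^ 2 + 2754 * X + 1) * Dop f
    + 15552 * X ^ 2 * (1796256 * X ^ 3 + 98496 * X ^ 2 + 1605 * X + 7) * f

lemma pfOperator_eq_sum (f : ℚ⟦X⟧) :
    pfOperator f = ∑ i : Fin 6, X ^ (i : ℕ) * ∑ j : Fin 5, C (pfCoeff i j) * Dop^[j] f := by
  simp only [pfOperator, Fin.sum_univ_six, Fin.sum_univ_five, pfCoeff, Matrix.of_apply,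
    Matrix.cons_val, Fin.coe_ofNat_eq_mod, Nat.reduceMod, Function.iterate_succ_apply',
    Function.iterate_zero_apply, map_ofNat, map_neg, map_zero, map_one]
  ring

lemma coeff_pfOperator (f : ℚ⟦X⟧) (n : ℕ) :
    coeff n (pfOperator f)
      = ∑ i : Fin 6, if (i : ℕ) ≤ n then pfPoly i (n - i : ℕ) * coeff (n - i) f else 0 := by
  simp only [pfOperator_eq_sum, map_sum, coeff_X_pow_mul', coeff_C_mul, coeff_Dop_iterate, pfPoly,
    sum_mul, mul_assoc]

lemma sum_pfPoly_mul_alpha33_eq_zero (n : ℕ) :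
    ∑ i : Fin 6, (if (i : ℕ) ≤ n then pfPoly i (n - i : ℕ) * alpha33 (n - i) else 0) = 0 := by
  rcases lt_or_ge n 5 with hn | hn
  · interval_cases n <;>
      norm_num [Fin.sum_univ_succ, pfPoly, pfCoeff, alpha33, sum_range_succ, Nat.factorial]
  · obtain ⟨m, rfl⟩ := Nat.exists_eq_add_of_le' hn
    rw [← alpha33_recurrence m]
    exact sum_congr rfl fun i _ => if_pos (by omega)

/-- `π(t) = Σ_d α_d t^d` is annihilated by the Picard–Fuchs operator
`L = (36t+1)⁴(693t−1) D⁴ + 18t(36t+1)³(13860t+61) D³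
  + 9t(36t+1)²(3492720t²+57672t+77) D² + 144t(36t+1)(11226600t³+377622t²+2754t+1) D
  + 15552t²(1796256t³+98496t²+1605t+7)`. -/
theorem period33_satisfies_PF :
    (36 * X + 1) ^ 4 * (693 * X - 1) * Dop (Dop (Dop (Dop (PowerSeries.mk alpha33))))
      + 18 * X * (36 * X + 1) ^ 3 * (13860 * X + 61) * Dop (Dop (Dop (PowerSeries.mk alpha33)))
      + 9 * X * (36 * X + 1) ^ 2 * (3492720 * X ^ 2 + 57672 * X + 77)
          * Dop (Dop (PowerSeries.mk alpha33))
      + 144 * X * (36 * X + 1) * (11226600 * X ^ 3 + 377622 * X ^ 2 + 2754 * X + 1)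
          * Dop (PowerSeries.mk alpha33)
      + 15552 * X ^ 2 * (1796256 * X ^ 3 + 98496 * X ^ 2 + 1605 * X + 7)
          * PowerSeries.mk alpha33 = 0 := by
  change pfOperator (mk alpha33) = 0
  ext n
  simpa only [coeff_pfOperator, coeff_mk, map_zero] using sum_pfPoly_mul_alpha33_eq_zero n
end

section
/- Let f(x_2, x_5, y_6, x_7) = x_2 + (1+y_6)^2/(x_2 y_6 x_7) + (1+y_6)/(x_5 y_6 x_7) + x_5 + x_7 and g(y_2, y_5, x_6, x_7) = (1+y_2+y_5)^2/(y_2 x_6 x_7) + (1+y_2+y_5)/(y_5 x_6 x_7) + x_6 + x_7. Under the birational change of variables y_2 = x_2/(x_5 y_6), y_5 = 1/y_6, x_6 = x_7, x_7 = x_2 + x_5, we have g(y_2, y_5, x_6, x_7) = f(x_2, x_5, y_6, x_7) as rational functions on the torus (ℂ^×)^4 (wherever defined). -/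
/-- The two Przyjalkowski mirrors of the hypersurface in `ℙ(𝒪^{⊕2} ⊕ 𝒪(1)^{⊕2})` over
`ℙ²` are related by the mutation
`(x₂, x₅, y₆, x₇) ↦ (x₂/(x₅y₆), 1/y₆, x₇, x₂+x₅) = (y₂, y₅, x₆, x₇)`:
substituting these values into `g` recovers `f`, wherever both are defined on the torus. -/
theorem mutation_relates_mirrors (x2 x5 y6 x7 : ℂ)
    (hx2 : x2 ≠ 0) (hx5 : x5 ≠ 0) (hy6 : y6 ≠ 0) (hx7 : x7 ≠ 0) (hsum : x2 + x5 ≠ 0) :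
    -- `g(y₂, y₅, x₆, x₇')` evaluated at `y₂ = x₂/(x₅y₆)`, `y₅ = 1/y₆`, `x₆ = x₇`, `x₇' = x₂+x₅`
    (fun y2 y5 x6 x7' =>
        (1 + y2 + y5) ^ 2 / (y2 * x6 * x7') + (1 + y2 + y5) / (y5 * x6 * x7') + x6 + x7')
      (x2 / (x5 * y6)) (1 / y6) x7 (x2 + x5)
    =
    -- `f(x₂, x₅, y₆, x₇)`
    x2 + (1 + y6) ^ 2 / (x2 * y6 * x7) + (1 + y6) / (x5 * y6 * x7) + x5 + x7 := by
  beta_reduce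
  obtain ⟨s, hs⟩ : ∃ s, x2 + x5 = s := ⟨_, rfl⟩
  rw [hs]
  have hs' : s ≠ 0 := hs ▸ hsum
  have hxy : x5 * y6 ≠ 0 := mul_ne_zero hx5 hy6
  have hy2 : x2 / (x5 * y6) ≠ 0 := div_ne_zero hx2 hxy
  have hd1 : x5 * y6 * x2 * x7 * s ≠ 0 :=
    mul_ne_zero (mul_ne_zero (mul_ne_zero hxy hx2) hx7) hs'
  have hd2 : x5 * x7 * s ≠ 0 := mul_ne_zero (mul_ne_zero hx5 hx7) hs'
  have hd3 : x2 * y6 * x7 ≠ 0 := mul_ne_zero (mul_ne_zero hx2 hy6) hx7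
  have hd4 : x5 * y6 * x7 ≠ 0 := mul_ne_zero (mul_ne_zero hx5 hy6) hx7
  have hD : x5 * y6 * x2 * x7 * s * (x5 * x7 * s) ≠ 0 := mul_ne_zero hd1 hd2
  have hE : x2 * y6 * x7 * (x5 * y6 * x7) ≠ 0 := mul_ne_zero hd3 hd4
  have t1 : (1 + x2 / (x5 * y6) + 1 / y6) ^ 2 / (x2 / (x5 * y6) * x7 * s)
      = (s + x5 * y6) ^ 2 / (x5 * y6 * x2 * x7 * s) := by
    rw [div_eq_div_iff (mul_ne_zero (mul_ne_zero hy2 hx7) hs') hd1]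
    rw [← hs]
    field_simp
    ring
  have t2 : (1 + x2 / (x5 * y6) + 1 / y6) / (1 / y6 * x7 * s)
      = (s + x5 * y6) / (x5 * x7 * s) := by
    rw [div_eq_div_iff (mul_ne_zero (mul_ne_zero (one_div_ne_zero hy6) hx7) hs') hd2]
    rw [← hs]
    field_simp
    ring
  rw [t1, t2, div_add_div _ _ hd1 hd2, add_assoc, div_add' _ _ _ hD]
  have rhs_eq : x2 + (1 + y6) ^ 2 / (x2 * y6 * x7) + (1 + y6) / (x5 * y6 * x7) + x5 + x7
      = ((1 + y6) ^ 2 * (x5 * y6 * x7) + x2 * y6 * x7 * (1 + y6)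
          + x2 * y6 * x7 * (x5 * y6 * x7) * (x2 + x5 + x7))
        / (x2 * y6 * x7 * (x5 * y6 * x7)) := by
    field_simp
    ring
  rw [rhs_eq, div_eq_div_iff hD hE]
  subst hs
  ring
end

section
/- If T_1, ..., T_k ∈ GL_n(ℂ) satisfy T_1⋯T_k = 1, the T_i have no common nonzero fixed vector and no common invariant proper nonzero subspace, and not all T_i = 1, then Σ_i dim(ℂ^n / ker(T_i − 1)) ≥ 2n. -/
set_option synthInstance.maxHeartbeats 1000000 in
set_option maxHeartbeats 1000000 in
/-- Linear-algebra core of the bound `rf(𝕍) ≥ 2 rk(𝕍)` for a nontrivial irreducible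
local system on `ℙ¹ ∖ S`: if invertible linear maps `T₁, …, T_k` of `ℂⁿ` satisfy
`T₁ ⋯ T_k = 1`, have no common proper nonzero invariant subspace, and are not all the
identity, then `Σ_i dim(ℂⁿ / ker(T_i − 1)) ≥ 2n`. -/
theorem ramification_lower_bound (n k : ℕ)
    (T : Fin k → ((Fin n → ℂ) ≃ₗ[ℂ] (Fin n → ℂ)))
    (hprod : (List.ofFn T).prod = 1)
    (hirred : ∀ W : Submodule ℂ (Fin n → ℂ),
      (∀ i, W.map (T i).toLinearMap ≤ W) → W = ⊥ ∨ W = ⊤)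
    (hnontriv : ∃ i, T i ≠ 1) :
    2 * n ≤ ∑ i, Module.finrank ℂ
      ((Fin n → ℂ) ⧸ LinearMap.ker ((T i).toLinearMap - LinearMap.id)) := by
  classical
  set V := Fin n → ℂ with hV
  set f : Fin k → (V →ₗ[ℂ] V) := fun i => (T i).toLinearMap - LinearMap.id with hf
  have hfapp : ∀ (i : Fin k) (x : V), f i x = T i x - x := by
    intro i x; simp [hf]
  -- partial products
  set p : ℕ → (V ≃ₗ[ℂ] V) := fun m => ((List.ofFn T).take m).prod with hp
  have hp0 : ∀ x : V, p 0 x = x := by intro x; simp [hp]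
  have hpk : ∀ x : V, p k x = x := by
    intro x
    have : (List.ofFn T).take k = List.ofFn T :=
      List.take_of_length_le (by simp)
    simp [hp, this, hprod]
  have hstep : ∀ (i : Fin k) (x : V), p (i.val + 1) x = p i.val (T i x) := by
    intro i x
    have h : ((List.ofFn T).take (i.val + 1)).prod
        = ((List.ofFn T).take i.val).prod * T i := by
      rw [List.prod_take_succ _ i.val (by simp)]
      congr 1
      simp
    show (p (i.val + 1)) x = _
    rw [hp]
    simp only
    rw [h]
    rfl
  -- the key map μ : Π i, range (f i) → V
  set μ : (Π i : Fin k, LinearMap.range (f i)) →ₗ[ℂ] V :=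
    ∑ i : Fin k, ((p i.val).toLinearMap.comp
      ((LinearMap.range (f i)).subtype.comp (LinearMap.proj i))) with hμ
  have hμ_apply : ∀ v : Π i : Fin k, LinearMap.range (f i),
      μ v = ∑ i : Fin k, p i.val (v i : V) := by
    intro v
    rw [hμ]
    simp [LinearMap.sum_apply]
  set R := LinearMap.range μ with hR
  -- single generators
  have memB : ∀ (i : Fin k) (x : V), p i.val (f i x) ∈ R := by
    intro i x
    refine ⟨Pi.single i ⟨f i x, LinearMap.mem_range_self _ x⟩, ?_⟩
    rw [hμ_apply]
    rw [Finset.sum_eq_single i]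
    · simp
    · intro j _ hj
      rw [Pi.single_eq_of_ne hj]
      simp
    · simp
  -- partial products minus identity land in R
  have memC : ∀ m, m ≤ k → ∀ x : V, p m x - x ∈ R := by
    intro m
    induction m with
    | zero => intro _ x; rw [hp0]; simp
    | succ m ih =>
      intro hm x
      have hmk : m < k := hm
      have h2 : p m (f ⟨m, hmk⟩ x) = p (m + 1) x - p m x := by
        rw [hfapp, map_sub]
        have := hstep ⟨m, hmk⟩ x
        simp only at this
        rw [this]
      have h1 : p (m + 1) x - x = p m (f ⟨m, hmk⟩ x) + (p m x - x) := by
        rw [h2]; abel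
      rw [h1]
      exact R.add_mem (memB ⟨m, hmk⟩ x) (ih (le_of_lt hmk) x)
  -- R is mapped onto itself by each partial product
  have mapP : ∀ m, m ≤ k → R.map (p m).toLinearMap = R := by
    intro m hm
    have hle : R.map (p m).toLinearMap ≤ R := by
      rintro _ ⟨r, hr, rfl⟩
      have h : (p m).toLinearMap r = (p m r - r) + r := by
        simp
      rw [h]
      exact R.add_mem (memC m hm r) hr
    exact Submodule.eq_of_le_of_finrank_le hle
      (le_of_eq ((p m).finrank_map_eq R).symm)
  -- R is invariant under each T j
  have hinv : ∀ j : Fin k, R.map (T j).toLinearMap ≤ R := by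
    rintro j _ ⟨r, hr, rfl⟩
    have h1 : p (j.val + 1) r ∈ R.map (p j.val).toLinearMap := by
      rw [mapP j.val j.isLt.le, ← mapP (j.val + 1) j.isLt]
      exact ⟨r, hr, rfl⟩
    obtain ⟨z, hz, hze⟩ := h1
    have : z = T j r := by
      have h2 : p j.val z = p j.val (T j r) := by
        rw [← hstep j r]; exact hze
      exact (p j.val).injective h2
    show T j r ∈ R
    rw [← this]; exact hz
  obtain ⟨i0, hi0⟩ := hnontriv
  -- R = ⊤
  have hRtop : R = ⊤ := by
    rcases hirred R hinv with h | h
    · exfalso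
      apply hi0
      refine LinearEquiv.ext fun x => ?_
      show T i0 x = x
      have hx := memB i0 x
      rw [h, Submodule.mem_bot] at hx
      have : f i0 x = 0 := by
        have := (p i0.val).map_eq_zero_iff.mp hx
        exact this
      rw [hfapp] at this
      exact sub_eq_zero.mp this
    · exact h
  -- the diagonal-type map δ
  set δ : V →ₗ[ℂ] (Π i : Fin k, LinearMap.range (f i)) :=
    LinearMap.pi (fun i => (f i).rangeRestrict) with hδ
  have hμδ : ∀ v : V, μ (δ v) = 0 := by
    intro v
    rw [hμ_apply]
    have h1 : ∀ i : Fin k, p i.val ((δ v i : V)) = p (i.val + 1) v - p i.val v := by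
      intro i
      have : (δ v i : V) = f i v := rfl
      rw [this, hfapp, map_sub, hstep i v]
    rw [Finset.sum_congr rfl (fun i _ => h1 i)]
    rw [Fin.sum_univ_eq_sum_range (fun m => p (m + 1) v - p m v) k]
    rw [Finset.sum_range_sub (fun m => p m v) k]
    rw [hpk, hp0, sub_self]
  -- δ is injective
  have hδinj : Function.Injective δ := by
    rw [← LinearMap.ker_eq_bot]
    -- common fixed subspace
    set W := ⨅ i : Fin k, LinearMap.ker (f i) with hW
    have hWinv : ∀ j : Fin k, W.map (T j).toLinearMap ≤ W := by
      rintro j _ ⟨w, hw, rfl⟩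
      have hfix : ∀ i : Fin k, f i w = 0 := by
        intro i
        exact (Submodule.mem_iInf _).mp hw i
      have : T j w = w := by
        have := hfix j
        rw [hfapp] at this
        exact sub_eq_zero.mp this
      show T j w ∈ W
      rw [this]; exact hw
    have hWbot : W = ⊥ := by
      rcases hirred W hWinv with h | h
      · exact h
      · exfalso
        apply hi0
        refine LinearEquiv.ext fun x => ?_
        show T i0 x = x
        have hx : (x : V) ∈ W := by rw [h]; trivial
        have := (Submodule.mem_iInf _).mp hx i0
        rw [LinearMap.mem_ker, hfapp] at this
        exact sub_eq_zero.mp this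
    rw [eq_bot_iff]
    intro v hv
    rw [LinearMap.mem_ker] at hv
    have hfv : ∀ i : Fin k, f i v = 0 := by
      intro i
      have : δ v i = 0 := by rw [hv]; rfl
      have h2 : ((δ v i : V)) = 0 := by rw [this]; rfl
      exact h2
    have : v ∈ W := (Submodule.mem_iInf _).mpr
      (fun i => LinearMap.mem_ker.mpr (hfv i))
    rw [hWbot] at this
    exact this
  -- counting
  have hrn : Module.finrank ℂ ↥(LinearMap.range μ) + Module.finrank ℂ ↥(LinearMap.ker μ)
      = Module.finrank ℂ (Π i : Fin k, LinearMap.range (f i)) :=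
    LinearMap.finrank_range_add_finrank_ker μ
  have hVn : Module.finrank ℂ V = n := Module.finrank_fin_fun ℂ
  have h1 : Module.finrank ℂ ↥(LinearMap.range μ) = n := by
    rw [← hR, hRtop, finrank_top, hVn]
  have h2 : n ≤ Module.finrank ℂ ↥(LinearMap.ker μ) := by
    have hcod : ∀ v, δ v ∈ LinearMap.ker μ := fun v => LinearMap.mem_ker.mpr (hμδ v)
    have hinj2 : Function.Injective (δ.codRestrict (LinearMap.ker μ) hcod) := by
      intro a b hab
      apply hδinj
      have : ∀ v, ((δ.codRestrict (LinearMap.ker μ) hcod) v : Π i : Fin k, LinearMap.range (f i)) = δ v :=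
        fun v => rfl
      rw [← this, ← this, hab]
    calc n = Module.finrank ℂ V := hVn.symm
      _ ≤ _ := LinearMap.finrank_le_finrank_of_injective hinj2
  have h3 : Module.finrank ℂ (Π i : Fin k, LinearMap.range (f i))
      = ∑ i : Fin k, Module.finrank ℂ ↥(LinearMap.range (f i)) :=
    Module.finrank_pi_fintype ℂ
  have h4 : ∀ i : Fin k, Module.finrank ℂ (V ⧸ LinearMap.ker (f i))
      = Module.finrank ℂ ↥(LinearMap.range (f i)) :=
    fun i => LinearEquiv.finrank_eq (f i).quotKerEquivRange
  calc 2 * n = n + n := by ring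
    _ ≤ Module.finrank ℂ ↥(LinearMap.range μ) + Module.finrank ℂ ↥(LinearMap.ker μ) := by
        rw [h1]; exact Nat.add_le_add_left h2 n
    _ = ∑ i : Fin k, Module.finrank ℂ ↥(LinearMap.range (f i)) := by rw [hrn, h3]
    _ = ∑ i, Module.finrank ℂ (V ⧸ LinearMap.ker (f i)) := by
        exact (Finset.sum_congr rfl (fun i _ => (h4 i))).symm
end
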